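/- Let D ⊊ ℝⁿ be a length a-John domain with center x₀ and let f : D → D' ⊂ ℝⁿ be an η-quasisymmetric homeomorphism onto a domain D' ⊊ ℝⁿ. Then D' is a length a'-John domain with center f(x₀), where a' depends only on a and η (and not on the dimension n). -/

import Mathlib

/-!
Let `x' ∈ D'` and `x = f⁻¹ x'`, joined to `x₀` by an `a`-carrot arc. Walking back from `x₀`, each
time to the last point of the arc at distance `c · d(p)` from the current point `p`, gives points
`x₀ = p 0, …, p M` followed by `x`: the remaining length drops by the factor `1 - c / a` at each
full step, so the walk stops. By quasisymmetry each image step `f (p i) → f (p (i + 1))` is at most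
`η (2 c) · d'(f (p i)) ≤ d'(f (p i)) / 4`. Beyond `p j`, the first `N` image steps are comparable
to `d'(f (p j))`; after that the chain stays at distance `≥ d(p j) / 2` from `p j` while its steps
shrink geometrically, and quasisymmetry on the connected set `D` turns this into geometric decay
of the image steps. Hence the polygon through `x', f (p M), …, f (p 0) = f x₀` is a carrot curve
in `D'` whose constant depends only on `a` and `η`.
-/


open Set Metric ENNReal

noncomputable section

variable {X : Type*} [MetricSpace X] {Y : Type*} [MetricSpace Y]

/-- Distance from a point `z` to the boundary of `D`, modeled as the distance
to the complement of `D`. -/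
def bdist (D : Set X) (z : X) : ℝ := Metric.infDist z Dᶜ

/-- Distance from a set `A` to the boundary of `D`. -/
def setBdist (D A : Set X) : ℝ := sInf (bdist D '' A)

/-- Quasihyperbolic length (variation) of `f` over the parameter set `s`, the
discretized version of `∫_γ |dz| / dist(z, ∂D)`. -/
def qhVariationOn (D : Set X) (f : ℝ → X) (s : Set ℝ) : ℝ≥0∞ :=
  ⨆ p : ℕ × { u : ℕ → ℝ // Monotone u ∧ ∀ i, u i ∈ s },
    ∑ i ∈ Finset.range p.1,
      edist (f (p.2.1 (i + 1))) (f (p.2.1 i)) /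
        max (ENNReal.ofReal (bdist D (f (p.2.1 i))))
            (ENNReal.ofReal (bdist D (f (p.2.1 (i + 1)))))

/-- `f : [0,1] → D` is a curve in `D` from `x` to `y`. -/
structure IsCurveIn (D : Set X) (f : ℝ → X) (x y : X) : Prop where
  cont : ContinuousOn f (Icc 0 1)
  mem : ∀ t ∈ Icc (0 : ℝ) 1, f t ∈ D
  source : f 0 = x
  target : f 1 = y

/-- Every pair of points of `D` can be joined by a rectifiable curve in `D`. -/
def RectifiablyConnected (D : Set X) : Prop :=
  ∀ x ∈ D, ∀ y ∈ D, ∃ f : ℝ → X, IsCurveIn D f x y ∧ eVariationOn f (Icc 0 1) < ⊤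

/-- The quasihyperbolic distance in `D`. -/
def qhDist (D : Set X) (x y : X) : ℝ≥0∞ :=
  ⨅ (f : ℝ → X) (_ : IsCurveIn D f x y ∧ eVariationOn f (Icc 0 1) < ⊤),
    qhVariationOn D f (Icc 0 1)

/-- Diameter of a set `A ⊆ D` with respect to the quasihyperbolic metric of `D`. -/
def qhDiam (D : Set X) (A : Set X) : ℝ≥0∞ := ⨆ x ∈ A, ⨆ y ∈ A, qhDist D x y

/-- `D` is a length `a`-John space with center `x₀`: every point can be joined to `x₀`
by an `a`-carrot arc, i.e. `ℓ(α[x,z]) ≤ a · dist(z, ∂D)` for every `z` on the arc. -/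
def IsLengthJohn (D : Set X) (a : ℝ) (x₀ : X) : Prop :=
  ∀ x ∈ D, ∃ f : ℝ → X, IsCurveIn D f x x₀ ∧
    ∀ t ∈ Icc (0 : ℝ) 1, eVariationOn f (Icc 0 t) ≤ ENNReal.ofReal (a * bdist D (f t))

/-- `D` is locally `(lam, c)`-quasiconvex: any two points of `B(x, lam·dist(x,∂D))`
can be joined by a `c`-quasiconvex curve in `D`. -/
def LocQuasiconvex (D : Set X) (lam c : ℝ) : Prop :=
  ∀ x ∈ D, ∀ y ∈ D, ∀ z ∈ D,
    dist y x < lam * bdist D x → dist z x < lam * bdist D x →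
      ∃ f : ℝ → X, IsCurveIn D f y z ∧
        eVariationOn f (Icc 0 1) ≤ ENNReal.ofReal (c * dist y z)

/-- `η` is a quasisymmetry control function: an increasing self-homeomorphism of `[0, ∞)`. -/
structure QSControl (η : ℝ → ℝ) : Prop where
  mono : StrictMonoOn η (Ici 0)
  cont : ContinuousOn η (Ici 0)
  zero : η 0 = 0
  surj : ∀ s : ℝ, 0 ≤ s → ∃ t : ℝ, 0 ≤ t ∧ η t = s

/-- `f` is `η`-quasisymmetric on `D`. -/
def IsQSOn (f : X → Y) (D : Set X) (η : ℝ → ℝ) : Prop :=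
  ∀ x ∈ D, ∀ a ∈ D, ∀ b ∈ D, ∀ t : ℝ, 0 ≤ t →
    dist x a ≤ t * dist x b → dist (f x) (f a) ≤ η t * dist (f x) (f b)

/-- `f` is a homeomorphism from `D` onto `D'` with inverse `g`. -/
def IsHomeoOn (f : X → Y) (g : Y → X) (D : Set X) (D' : Set Y) : Prop :=
  ContinuousOn f D ∧ ContinuousOn g D' ∧ MapsTo f D D' ∧ MapsTo g D' D ∧ InvOn g f D D'

end

open Filter Topology

section Bdist

variable {X : Type*} [MetricSpace X]

theorem bdist_nonneg (D : Set X) (x : X) : 0 ≤ bdist D x := infDist_nonneg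

theorem bdist_pos {D : Set X} (hD : IsOpen D) (hDc : Dᶜ.Nonempty) {x : X} (hx : x ∈ D) :
    0 < bdist D x :=
  (hD.isClosed_compl.notMem_iff_infDist_pos hDc).1 (not_not.2 hx)

theorem bdist_le_bdist_add_dist (D : Set X) (x y : X) : bdist D x ≤ bdist D y + dist x y :=
  infDist_le_infDist_add_dist

theorem mem_of_dist_lt_bdist {D : Set X} {x y : X} (h : dist y x < bdist D x) : y ∈ D := by
  by_contra hy
  exact (infDist_le_dist_of_mem (show y ∈ Dᶜ from hy)).not_gt (by rwa [dist_comm] at h)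

end Bdist

namespace eVariationOn

variable {α : Type*} [LinearOrder α]

theorem add_le {E : Type*} [SeminormedAddCommGroup E] (f g : α → E) (s : Set α) :
    eVariationOn (f + g) s ≤ eVariationOn f s + eVariationOn g s := by
  refine iSup_le fun ⟨n, u, hu, us⟩ => ?_
  calc ∑ i ∈ Finset.range n, edist ((f + g) (u (i + 1))) ((f + g) (u i))
      ≤ ∑ i ∈ Finset.range n,
          (edist (f (u (i + 1))) (f (u i)) + edist (g (u (i + 1))) (g (u i))) :=
        Finset.sum_le_sum fun i _ => edist_add_add_le _ _ _ _
    _ ≤ eVariationOn f s + eVariationOn g s := by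
        rw [Finset.sum_add_distrib]
        exact add_le_add (sum_le hu us) (sum_le hu us)

theorem finset_sum_le {E ι : Type*} [SeminormedAddCommGroup E] (F : ι → α → E) (t : Finset ι)
    (s : Set α) : eVariationOn (∑ i ∈ t, F i) s ≤ ∑ i ∈ t, eVariationOn (F i) s := by
  classical
  induction t using Finset.induction_on with
  | empty =>
    exact (constant_on (subsingleton_singleton.anti (image_subset_iff.2 fun _ _ => rfl))).le
  | insert i t hi ih =>
    rw [Finset.sum_insert hi, Finset.sum_insert hi]
    exact (add_le _ _ s).trans (add_le_add le_rfl ih)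

theorem smul_const_le {E : Type*} [NormedAddCommGroup E] [NormedSpace ℝ E] (φ : α → ℝ) (v : E)
    (s : Set α) : eVariationOn (fun t => φ t • v) s ≤ ‖v‖₊ * eVariationOn φ s := by
  have hv : LipschitzWith ‖v‖₊ (fun r : ℝ => r • v) := LipschitzWith.of_dist_le_mul fun r r' => by
    rw [dist_eq_norm, ← sub_smul, norm_smul, Real.dist_eq, mul_comm, coe_nnnorm, Real.norm_eq_abs]
  exact (hv.lipschitzOnWith (s := univ)).comp_eVariationOn_le (mapsTo_univ _ _)

theorem dist_add_toReal_le {E : Type*} [PseudoMetricSpace E] {f : ℝ → E} {a s t : ℝ}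
    (has : a ≤ s) (hst : s ≤ t) (hfin : eVariationOn f (Icc a t) ≠ ⊤) :
    dist (f t) (f s) + (eVariationOn f (Icc a s)).toReal ≤ (eVariationOn f (Icc a t)).toReal := by
  have hsplit := Icc_add_Icc f (s := univ) has hst (mem_univ s)
  simp only [univ_inter] at hsplit
  have h : edist (f t) (f s) + eVariationOn f (Icc a s) ≤ eVariationOn f (Icc a t) := by
    rw [← hsplit, add_comm]
    gcongr
    exact edist_le f ⟨hst, le_rfl⟩ ⟨le_rfl, hst⟩
  have hfin' : eVariationOn f (Icc a s) ≠ ⊤ := ne_top_of_le_ne_top hfin (le_of_add_le_right h)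
  simpa [ENNReal.toReal_add (edist_ne_top _ _) hfin', ← dist_edist] using
    ENNReal.toReal_mono hfin h

end eVariationOn

section LastFar

variable {X : Type*} [MetricSpace X]

/-- `0` when `α` never gets `r`-far from `α t` on `[0, t]` (`sSup ∅ = 0`); the carrot chain
below relies on this to end at the start of the arc. -/
noncomputable def lastFar (α : ℝ → X) (r t : ℝ) : ℝ :=
  sSup {s | s ∈ Icc 0 t ∧ r ≤ dist (α s) (α t)}

variable {α : ℝ → X} {r t : ℝ}

theorem lastFar_mem (hα : ContinuousOn α (Icc 0 t)) (h : ∃ s ∈ Icc 0 t, r ≤ dist (α s) (α t)) :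
    lastFar α r t ∈ Icc 0 t ∧ r ≤ dist (α (lastFar α r t)) (α t) := by
  have hclosed : IsClosed {s | s ∈ Icc 0 t ∧ r ≤ dist (α s) (α t)} :=
    ((continuous_id.dist continuous_const).comp_continuousOn hα).preimage_isClosed_of_isClosed
      isClosed_Icc isClosed_Ici
  exact hclosed.csSup_mem h (bddAbove_Icc.mono fun s hs => hs.1)

theorem lastFar_eq_zero (h : ¬ ∃ s ∈ Icc 0 t, r ≤ dist (α s) (α t)) : lastFar α r t = 0 := by
  have : {s | s ∈ Icc 0 t ∧ r ≤ dist (α s) (α t)} = ∅ :=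
    eq_empty_of_forall_notMem fun s hs => h ⟨s, hs⟩
  rw [lastFar, this, Real.sSup_empty]

theorem lastFar_mem_Icc (hα : ContinuousOn α (Icc 0 t)) (ht : 0 ≤ t) : lastFar α r t ∈ Icc 0 t := by
  by_cases h : ∃ s ∈ Icc 0 t, r ≤ dist (α s) (α t)
  · exact (lastFar_mem hα h).1
  · rw [lastFar_eq_zero h]
    exact ⟨le_rfl, ht⟩

theorem dist_lastFar (hα : ContinuousOn α (Icc 0 t)) (hr : 0 ≤ r)
    (h : ∃ s ∈ Icc 0 t, r ≤ dist (α s) (α t)) : dist (α (lastFar α r t)) (α t) = r := by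
  obtain ⟨hmem, hfar⟩ := lastFar_mem hα h
  have hcont : ContinuousOn (fun s => dist (α s) (α t)) (Icc (lastFar α r t) t) :=
    (continuous_id.dist continuous_const).comp_continuousOn
      (hα.mono (Icc_subset_Icc hmem.1 le_rfl))
  obtain ⟨s, hs, hsr⟩ := intermediate_value_Icc' hmem.2 hcont ⟨by simpa using hr, hfar⟩
  have hle : s ≤ lastFar α r t :=
    le_csSup (bddAbove_Icc.mono fun s hs => hs.1) ⟨⟨hmem.1.trans hs.1, hs.2⟩, hsr.ge⟩
  rwa [le_antisymm hle hs.1] at hsr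

theorem dist_lastFar_le (hα : ContinuousOn α (Icc 0 t)) (hr : 0 ≤ r) (ht : 0 ≤ t) :
    dist (α (lastFar α r t)) (α t) ≤ r := by
  by_cases h : ∃ s ∈ Icc 0 t, r ≤ dist (α s) (α t)
  · exact (dist_lastFar hα hr h).le
  · rw [lastFar_eq_zero h]
    exact (not_le.1 fun h0 => h ⟨0, ⟨le_rfl, ht⟩, h0⟩).le

theorem iterate_lastFar_mem_Icc (hα : ContinuousOn α (Icc 0 1)) (ρ : ℝ → ℝ) (i : ℕ) :
    (fun t => lastFar α (ρ t) t)^[i] 1 ∈ Icc (0 : ℝ) 1 := by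
  induction i with
  | zero => exact ⟨zero_le_one, le_rfl⟩
  | succ i ih =>
    rw [Function.iterate_succ_apply']
    set t := (fun t => lastFar α (ρ t) t)^[i] 1
    have := lastFar_mem_Icc (r := ρ t) (hα.mono (Icc_subset_Icc le_rfl ih.2)) ih.1
    exact ⟨this.1, this.2.trans ih.2⟩

end LastFar

theorem one_sub_div_mem_Ico {a c : ℝ} (hc : 0 < c) (hca : c ≤ a) : 1 - c / a ∈ Ico (0 : ℝ) 1 :=
  ⟨sub_nonneg.2 ((div_le_one (hc.trans_le hca)).2 hca),
    sub_lt_self 1 (div_pos hc (hc.trans_le hca))⟩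

section CarrotChain

variable {X : Type*} [MetricSpace X]

/-- A carrot arc of `D` discretized backwards from its end: each step `p i → p (i + 1)` has
length at most, and for `i < M` exactly, `c · d(p i)`, and `Λ i` bounds the length of the arc
that remains beyond `p i`. -/
structure IsCarrotChain (D : Set X) (a c : ℝ) (M : ℕ) (p : ℕ → X) (Λ : ℕ → ℝ) : Prop where
  mem : ∀ i, p i ∈ D
  dist_succ_le : ∀ i, dist (p (i + 1)) (p i) ≤ c * bdist D (p i)
  le_dist_succ : ∀ i < M, c * bdist D (p i) ≤ dist (p (i + 1)) (p i)
  dist_succ_add_le : ∀ i, dist (p (i + 1)) (p i) + Λ (i + 1) ≤ Λ i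
  nonneg : ∀ i, 0 ≤ Λ i
  le_mul_bdist : ∀ i, Λ i ≤ a * bdist D (p i)

namespace IsCarrotChain

variable {D : Set X} {a c : ℝ} {M : ℕ} {p : ℕ → X} {Λ : ℕ → ℝ} {i j : ℕ}

theorem dist_add_le (h : IsCarrotChain D a c M p Λ) (hji : j ≤ i) :
    dist (p i) (p j) + Λ i ≤ Λ j := by
  induction i, hji using Nat.le_induction with
  | base => simp
  | succ i _ ih => linarith [dist_triangle (p (i + 1)) (p i) (p j), h.dist_succ_add_le i]

theorem dist_le (h : IsCarrotChain D a c M p Λ) (hji : j ≤ i) : dist (p j) (p i) ≤ Λ j := by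
  rw [dist_comm]
  linarith [h.dist_add_le hji, h.nonneg i]

theorem mul_bdist_le (h : IsCarrotChain D a c M p Λ) (hi : i < M) : c * bdist D (p i) ≤ Λ i := by
  linarith [h.le_dist_succ i hi, h.dist_succ_add_le i, h.nonneg (i + 1)]

theorem succ_le (h : IsCarrotChain D a c M p Λ) (hc : 0 ≤ c) (ha : 0 < a) (hi : i < M) :
    Λ (i + 1) ≤ (1 - c / a) * Λ i := by
  have : c / a * Λ i ≤ c * bdist D (p i) :=
    calc c / a * Λ i ≤ c / a * (a * bdist D (p i)) := by gcongr; exact h.le_mul_bdist i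
      _ = c * bdist D (p i) := by field_simp
  linarith [h.le_dist_succ i hi, h.dist_succ_add_le i]

theorem le_pow_mul (h : IsCarrotChain D a c M p Λ) (hc : 0 < c) (hca : c ≤ a) {l : ℕ}
    (hl : j + l ≤ M) : Λ (j + l) ≤ (1 - c / a) ^ l * Λ j := by
  have hθ := (one_sub_div_mem_Ico hc hca).1
  induction l with
  | zero => simp
  | succ l ih =>
    calc Λ (j + l + 1) ≤ (1 - c / a) * Λ (j + l) := h.succ_le hc.le (hc.trans_le hca) (by omega)
      _ ≤ (1 - c / a) * ((1 - c / a) ^ l * Λ j) := by gcongr; exact ih (by omega)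
      _ = (1 - c / a) ^ (l + 1) * Λ j := by ring

/-- Once the chain has gone `N` steps past `p j`, the remaining length is so small compared to
`d(p j)` that `p i` stays at distance `≥ d(p j) / 2` from `p j`, while the next step is
geometrically small. -/
theorem dist_succ_le_pow_mul_dist (h : IsCarrotChain D a c M p Λ) (hc : 0 < c) (hc1 : c ≤ 1)
    (hca : c ≤ a) {N : ℕ} (hN : 2 * a * (1 - c / a) ^ N ≤ c) (hi : i < M) (hNij : j + N ≤ i) :
    dist (p i) (p (i + 1)) ≤ (1 - c / a) ^ (i - j - N) * dist (p i) (p j) := by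
  set θ := 1 - c / a
  set l := i - j - N
  obtain ⟨hθ0, hθ1⟩ := one_sub_div_mem_Ico hc hca
  have hθl : θ ^ l ≤ 1 := pow_le_one₀ hθ0 hθ1.le
  have hdj := bdist_nonneg D (p j)
  have hΛi : Λ i ≤ c / 2 * θ ^ l * bdist D (p j) :=
    calc Λ i = Λ (j + (N + l)) := by congr 1; omega
      _ ≤ θ ^ (N + l) * Λ j := h.le_pow_mul hc hca (by omega)
      _ ≤ θ ^ (N + l) * (a * bdist D (p j)) := by gcongr; exact h.le_mul_bdist j
      _ = a * θ ^ N * (θ ^ l * bdist D (p j)) := by ring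
      _ ≤ c / 2 * (θ ^ l * bdist D (p j)) := by gcongr; linarith
      _ = c / 2 * θ ^ l * bdist D (p j) := by ring
  have hsep : bdist D (p j) ≤ 2 * dist (p i) (p j) := by
    have : c * bdist D (p i) ≤ c * (bdist D (p j) / 2) := by
      nlinarith [h.mul_bdist_le hi,
        mul_le_mul_of_nonneg_left hθl (by positivity : 0 ≤ c / 2 * bdist D (p j))]
    have := le_of_mul_le_mul_left this hc
    linarith [bdist_le_bdist_add_dist D (p j) (p i), dist_comm (p i) (p j)]
  calc dist (p i) (p (i + 1)) ≤ Λ i := by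
        rw [dist_comm]; linarith [h.dist_succ_add_le i, h.nonneg (i + 1)]
    _ ≤ c / 2 * θ ^ l * (2 * dist (p i) (p j)) := by
        refine hΛi.trans ?_; gcongr
    _ = c * (θ ^ l * dist (p i) (p j)) := by ring
    _ ≤ θ ^ l * dist (p i) (p j) := mul_le_of_le_one_left (by positivity) hc1

end IsCarrotChain

/-- A carrot chain cannot go on forever with full steps: its lengths decay geometrically, while
they control `d(x)` for a point `x` of `D` at the end of the arc. -/
theorem not_forall_isCarrotChain {D : Set X} {a c : ℝ} {p : ℕ → X} {Λ : ℕ → ℝ} {x : X}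
    (hx : 0 < bdist D x) (hdist : ∀ i, dist x (p i) ≤ Λ i) (hc : 0 < c) (hca : c ≤ a) :
    ¬ ∀ M, IsCarrotChain D a c M p Λ := by
  intro h
  set θ := 1 - c / a
  obtain ⟨hθ0, hθ1⟩ := one_sub_div_mem_Ico hc hca
  have key : ∀ n, c * bdist D x ≤ (1 + c) * (θ ^ n * Λ 0) := fun n => by
    have hdecay : Λ n ≤ θ ^ n * Λ 0 := by
      simpa using (h n).le_pow_mul hc hca (j := 0) (l := n) (by omega)
    have := (h (n + 1)).mul_bdist_le (Nat.lt_succ_self n)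
    have := bdist_le_bdist_add_dist D x (p n)
    nlinarith [mul_le_mul_of_nonneg_left (hdist n) hc.le]
  have hlim : Tendsto (fun n => (1 + c) * (θ ^ n * Λ 0)) atTop (𝓝 0) := by
    simpa using ((tendsto_pow_atTop_nhds_zero_of_lt_one hθ0 hθ1).mul_const (Λ 0)).const_mul (1 + c)
  linarith [ge_of_tendsto' hlim key, mul_pos hc hx]

end CarrotChain

section CarrotChainExistence

variable {X : Type*} [MetricSpace X]

theorem exists_isCarrotChain {D : Set X} {a c : ℝ} {α : ℝ → X} {x x₀ : X}
    (hα : IsCurveIn D α x x₀)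
    (hcarrot : ∀ t ∈ Icc (0 : ℝ) 1, eVariationOn α (Icc 0 t) ≤ ENNReal.ofReal (a * bdist D (α t)))
    (hx : 0 < bdist D x) (hc : 0 < c) (hca : c ≤ a) :
    ∃ M p Λ, IsCarrotChain D a c M p Λ ∧ p 0 = x₀ ∧ p (M + 1) = x := by
  set next : ℝ → ℝ := fun t => lastFar α (c * bdist D (α t)) t
  set T : ℕ → ℝ := fun i => next^[i] 1
  set Λ : ℕ → ℝ := fun i => (eVariationOn α (Icc 0 (T i))).toReal
  set far : ℕ → Prop := fun i => ∃ s ∈ Icc 0 (T i), c * bdist D (α (T i)) ≤ dist (α s) (α (T i))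
  have hTsucc (i : ℕ) : T (i + 1) = next (T i) := Function.iterate_succ_apply' next i 1
  have hT (i : ℕ) : T i ∈ Icc (0 : ℝ) 1 := iterate_lastFar_mem_Icc hα.cont _ i
  have hcont (i : ℕ) : ContinuousOn α (Icc 0 (T i)) :=
    hα.cont.mono (Icc_subset_Icc le_rfl (hT i).2)
  have hnext (i : ℕ) : T (i + 1) ∈ Icc 0 (T i) := by
    rw [hTsucc]; exact lastFar_mem_Icc (hcont i) (hT i).1
  have hrad (i : ℕ) : 0 ≤ c * bdist D (α (T i)) := mul_nonneg hc.le (bdist_nonneg _ _)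
  have hfar (i : ℕ) (hi : far i) : dist (α (T (i + 1))) (α (T i)) = c * bdist D (α (T i)) := by
    rw [hTsucc]; exact dist_lastFar (hcont i) (hrad i) hi
  have hnear (i : ℕ) (hi : ¬ far i) : α (T (i + 1)) = x := by
    rw [hTsucc, ← hα.source]; exact congrArg α (lastFar_eq_zero hi)
  have hfin (i : ℕ) : eVariationOn α (Icc 0 (T i)) ≠ ⊤ :=
    (hcarrot _ (hT i)).trans_lt ENNReal.ofReal_lt_top |>.ne
  have hchain (M : ℕ) (hM : ∀ i < M, far i) : IsCarrotChain D a c M (fun i => α (T i)) Λ :=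
    { mem := fun i => hα.mem _ (hT i)
      dist_succ_le := fun i => by rw [hTsucc]; exact dist_lastFar_le (hcont i) (hrad i) (hT i).1
      le_dist_succ := fun i hi => (hfar i (hM i hi)).ge
      dist_succ_add_le := fun i => by
        rw [dist_comm]; exact eVariationOn.dist_add_toReal_le (hnext i).1 (hnext i).2 (hfin i)
      nonneg := fun i => ENNReal.toReal_nonneg
      le_mul_bdist := fun i => ENNReal.toReal_le_of_le_ofReal
        (mul_nonneg (hc.le.trans hca) (bdist_nonneg _ _)) (hcarrot _ (hT i)) }
  have hterm : ∃ M, ¬ far M := by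
    by_contra! hall
    refine not_forall_isCarrotChain hx (fun i => ?_) hc hca fun M => hchain M fun i _ => hall i
    have := eVariationOn.dist_add_toReal_le le_rfl (hT i).1 (hfin i)
    rw [← hα.source, dist_comm]
    linarith [ENNReal.toReal_nonneg (a := eVariationOn α (Icc 0 0))]
  classical
  exact ⟨Nat.find hterm, fun i => α (T i), Λ,
    hchain _ fun i hi => not_not.1 (Nat.find_min hterm hi), hα.target,
    hnear _ (Nat.find_spec hterm)⟩

end CarrotChainExistence

section Quasisymmetry

variable {X : Type*} [MetricSpace X] {Y : Type*} [MetricSpace Y]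

/-- Quasisymmetry compares `v` with a point `w` far from `u` whose image lies within `d'(f u)` of
`f u`. Such a `w` exists: otherwise `f` would map a compact ball around `u` onto a closed set
containing the ball of radius `d'(f u)` around `f u`, hence a point of `D'ᶜ`. -/
theorem IsQSOn.dist_le_mul_bdist [ProperSpace X] {F : Type*} [NormedAddCommGroup F]
    [NormedSpace ℝ F] [ProperSpace F] {D : Set X} {D' : Set F} {f : X → F} {η : ℝ → ℝ}
    (hqs : IsQSOn f D η) (hD : IsOpen D) (hDc : Dᶜ.Nonempty) (hD' : IsOpen D')
    (hD'c : D'ᶜ.Nonempty) (hf : ContinuousOn f D) (hfD : MapsTo f D D') (hfD' : SurjOn f D D')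
    {u v : X} (hu : u ∈ D) (hv : v ∈ D) {T : ℝ} (hT : 0 ≤ T) (hηT : 0 ≤ η (2 * T))
    (huv : dist u v ≤ T * bdist D u) : dist (f u) (f v) ≤ η (2 * T) * bdist D' (f u) := by
  set d := bdist D u
  set R := bdist D' (f u)
  have hd : 0 < d := bdist_pos hD hDc hu
  have hR : 0 < R := bdist_pos hD' hD'c (hfD hu)
  obtain ⟨w, hwD, hw, hfw⟩ : ∃ w ∈ D, d / 2 < dist u w ∧ dist (f u) (f w) ≤ R := by
    by_contra! hnone
    have hB : closedBall u (d / 2) ⊆ D := fun y hy =>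
      mem_of_dist_lt_bdist (by rw [mem_closedBall] at hy; linarith)
    have hball : ball (f u) R ⊆ f '' closedBall u (d / 2) := by
      intro y hy
      rw [mem_ball] at hy
      obtain ⟨w, hwD, rfl⟩ := hfD' (mem_of_dist_lt_bdist hy)
      refine ⟨w, ?_, rfl⟩
      rw [mem_closedBall, dist_comm]
      by_contra hfar
      exact (hnone w hwD (not_le.1 hfar)).not_ge (by rw [dist_comm]; exact hy.le)
    have hsub : closedBall (f u) R ⊆ D' := by
      rw [← closure_ball _ hR.ne']
      refine (closure_minimal hball ?_).trans ((image_mono hB).trans hfD.image_subset)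
      exact ((isCompact_closedBall u (d / 2)).image_of_continuousOn (hf.mono hB)).isClosed
    obtain ⟨ξ, hξ, hξd⟩ := hD'.isClosed_compl.exists_infDist_eq_dist hD'c (f u)
    exact hξ (hsub (by rw [mem_closedBall, dist_comm]; exact hξd.ge))
  calc dist (f u) (f v) ≤ η (2 * T) * dist (f u) (f w) :=
        hqs u hu v hv w hwD (2 * T) (by positivity) (by nlinarith)
    _ ≤ η (2 * T) * R := by gcongr

/-- Intermediate points, which exist by connectedness, let quasisymmetry be iterated: shrinking
distances from `u` by `σ` shrinks image distances by `1 / 2`. -/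
theorem IsQSOn.dist_le_of_dist_le_pow {D : Set X} {f : X → Y} {η : ℝ → ℝ} (hqs : IsQSOn f D η)
    (hD : IsPreconnected D) {σ : ℝ} (hσ0 : 0 ≤ σ) (hσ1 : σ ≤ 1) (hησ : η σ ≤ 1 / 2)
    (hη1 : 0 ≤ η 1) {u z b : X} (hu : u ∈ D) (hz : z ∈ D) (hb : b ∈ D) (m : ℕ)
    (huz : dist u z ≤ σ ^ m * dist u b) :
    dist (f u) (f z) ≤ η 1 * ((1 / 2) ^ m * dist (f u) (f b)) := by
  have key (k : ℕ) : ∃ w ∈ D, dist u w = σ ^ k * dist u b ∧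
      dist (f u) (f w) ≤ (1 / 2) ^ k * dist (f u) (f b) := by
    induction k with
    | zero => exact ⟨b, hb, by simp, by simp⟩
    | succ k ih =>
      obtain ⟨w, hwD, hwd, hfw⟩ := ih
      have hmem : σ ^ (k + 1) * dist u b ∈ Icc (dist u u) (dist u w) := by
        rw [dist_self, hwd, pow_succ]
        exact ⟨by positivity, by
          rw [mul_right_comm]; exact mul_le_of_le_one_right (by positivity) hσ1⟩
      obtain ⟨w', hw'D, hw'⟩ := hD.intermediate_value hu hwD
        (continuous_const.dist continuous_id).continuousOn hmem
      replace hw' : dist u w' = σ ^ (k + 1) * dist u b := hw'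
      refine ⟨w', hw'D, hw', ?_⟩
      calc dist (f u) (f w') ≤ η σ * dist (f u) (f w) :=
            hqs u hu w' hw'D w hwD σ hσ0 (by rw [hw', hwd, pow_succ]; linarith)
        _ ≤ 1 / 2 * ((1 / 2) ^ k * dist (f u) (f b)) := by gcongr
        _ = (1 / 2) ^ (k + 1) * dist (f u) (f b) := by ring
  obtain ⟨w, hwD, hwd, hfw⟩ := key m
  calc dist (f u) (f z) ≤ η 1 * dist (f u) (f w) :=
        hqs u hu z hz w hwD 1 zero_le_one (by rw [hwd]; simpa using huz)
    _ ≤ η 1 * ((1 / 2) ^ m * dist (f u) (f b)) := by gcongr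

end Quasisymmetry

theorem sum_range_half_pow_div_le {K : ℕ} (hK : 0 < K) (L : ℕ) :
    ∑ l ∈ Finset.range L, (1 / 2 : ℝ) ^ (l / K) ≤ 2 * K := by
  have hblocks (Q : ℕ) : ∑ l ∈ Finset.range (K * Q), (1 / 2 : ℝ) ^ (l / K) =
      K * ∑ q ∈ Finset.range Q, (1 / 2 : ℝ) ^ q := by
    induction Q with
    | zero => simp
    | succ Q ih =>
      have hblock : ∀ r ∈ Finset.range K, (1 / 2 : ℝ) ^ ((K * Q + r) / K) = (1 / 2) ^ Q := by
        intro r hr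
        rw [add_comm, Nat.add_mul_div_left _ _ hK, Nat.div_eq_of_lt (Finset.mem_range.1 hr),
          zero_add]
      rw [Nat.mul_succ, Finset.sum_range_add, ih, Finset.sum_congr rfl hblock,
        Finset.sum_range_succ]
      simp [mul_add]
  calc ∑ l ∈ Finset.range L, (1 / 2 : ℝ) ^ (l / K)
      ≤ ∑ l ∈ Finset.range (K * L), (1 / 2 : ℝ) ^ (l / K) :=
        Finset.sum_le_sum_of_subset_of_nonneg
          (Finset.range_subset_range.2 (Nat.le_mul_of_pos_left L hK)) fun _ _ _ => by positivity
    _ ≤ K * 2 := by rw [hblocks]; gcongr; exact sum_geometric_two_le L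
    _ = 2 * K := mul_comm _ _

theorem sum_range_ite_le {A B : ℝ} (hA : 0 ≤ A) (hB : 0 ≤ B) {K : ℕ} (hK : 0 < K) (N L : ℕ) :
    ∑ l ∈ Finset.range L, (if l < N then A else B * (1 / 2) ^ ((l - N) / K)) ≤
      N * A + B * (2 * K) := by
  calc ∑ l ∈ Finset.range L, (if l < N then A else B * (1 / 2) ^ ((l - N) / K))
      ≤ ∑ l ∈ Finset.range (N + L), (if l < N then A else B * (1 / 2) ^ ((l - N) / K)) :=
        Finset.sum_le_sum_of_subset_of_nonneg (Finset.range_subset_range.2 (Nat.le_add_left L N))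
          fun _ _ _ => by split_ifs <;> positivity
    _ = N * A + B * ∑ l ∈ Finset.range L, (1 / 2 : ℝ) ^ (l / K) := by
        rw [Finset.sum_range_add, Finset.mul_sum]
        congr 1
        · rw [Finset.sum_congr rfl fun l hl => if_pos (Finset.mem_range.1 hl)]
          simp
        · exact Finset.sum_congr rfl fun l _ => by simp
    _ ≤ N * A + B * (2 * K) := by gcongr; exact sum_range_half_pow_div_le hK L

namespace IsCarrotChain

variable {X : Type*} [MetricSpace X] {Y : Type*} [MetricSpace Y] {D : Set X} {D' : Set Y}
  {a c κ : ℝ} {M : ℕ} {p : ℕ → X} {Λ : ℕ → ℝ} {f : X → Y} {η : ℝ → ℝ} {i j : ℕ}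

/-- Quasisymmetry for the triple `p j, z, p (j + 1)`: by the carrot condition, the full step
`p j → p (j + 1)` is at least `c / a` times the remaining length. -/
theorem dist_image_le (h : IsCarrotChain D a c M p Λ) (hqs : IsQSOn f D η) (hc : 0 < c)
    (ha : 0 ≤ a) (hη : 0 ≤ η (a / c))
    (hstep : ∀ i ≤ M, dist (f (p (i + 1))) (f (p i)) ≤ κ * bdist D' (f (p i)))
    (hj : j < M) {z : X} (hz : z ∈ D) (hdz : dist (p j) z ≤ Λ j) :
    dist (f (p j)) (f z) ≤ η (a / c) * κ * bdist D' (f (p j)) := by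
  have hrel : dist (p j) z ≤ a / c * dist (p j) (p (j + 1)) :=
    calc dist (p j) z ≤ a * bdist D (p j) := hdz.trans (h.le_mul_bdist j)
      _ = a / c * (c * bdist D (p j)) := by field_simp
      _ ≤ a / c * dist (p j) (p (j + 1)) := by
          rw [dist_comm]; gcongr; exact h.le_dist_succ j hj
  calc dist (f (p j)) (f z) ≤ η (a / c) * dist (f (p j)) (f (p (j + 1))) :=
        hqs _ (h.mem j) z hz _ (h.mem _) _ (by positivity) hrel
    _ ≤ η (a / c) * (κ * bdist D' (f (p j))) := by
        rw [dist_comm]; gcongr; exact hstep j hj.le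
    _ = η (a / c) * κ * bdist D' (f (p j)) := by ring

theorem bdist_image_le (h : IsCarrotChain D a c M p Λ) (hqs : IsQSOn f D η) (hc : 0 < c)
    (ha : 0 ≤ a) (hη : 0 ≤ η (a / c)) (hκ : 0 ≤ κ)
    (hstep : ∀ i ≤ M, dist (f (p (i + 1))) (f (p i)) ≤ κ * bdist D' (f (p i)))
    (hji : j ≤ i) (hiM : i ≤ M) :
    bdist D' (f (p i)) ≤ (1 + η (a / c) * κ) * bdist D' (f (p j)) := by
  rcases hji.eq_or_lt with rfl | hlt
  · nlinarith [bdist_nonneg D' (f (p j)), mul_nonneg hη hκ]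
  · have := h.dist_image_le hqs hc ha hη hstep (hlt.trans_le hiM) (h.mem i) (h.dist_le hlt.le)
    linarith [bdist_le_bdist_add_dist D' (f (p i)) (f (p j)), dist_comm (f (p i)) (f (p j))]

theorem dist_image_succ_le_half_pow (h : IsCarrotChain D a c M p Λ) (hqs : IsQSOn f D η)
    (hD : IsPreconnected D) (hc : 0 < c) (hc1 : c ≤ 1) (hca : c ≤ a)
    (hη : ∀ t, 0 ≤ t → 0 ≤ η t) {K₀ N : ℕ} (hK₀ : η ((1 - c / a) ^ K₀) ≤ 1 / 2)
    (hN : 2 * a * (1 - c / a) ^ N ≤ c)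
    (hstep : ∀ i ≤ M, dist (f (p (i + 1))) (f (p i)) ≤ κ * bdist D' (f (p i)))
    (hi : i < M) (hNij : j + N ≤ i) :
    dist (f (p (i + 1))) (f (p i)) ≤
      η 1 * (η (a / c) * κ) * (1 / 2) ^ ((i - j - N) / K₀) * bdist D' (f (p j)) := by
  set θ := 1 - c / a
  set m := (i - j - N) / K₀
  obtain ⟨hθ0, hθ1⟩ := one_sub_div_mem_Ico hc hca
  have hgeo : dist (p i) (p (i + 1)) ≤ (θ ^ K₀) ^ m * dist (p i) (p j) := by
    refine (h.dist_succ_le_pow_mul_dist hc hc1 hca hN hi hNij).trans ?_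
    rw [← pow_mul]
    exact mul_le_mul_of_nonneg_right (pow_le_pow_of_le_one hθ0 hθ1.le (Nat.mul_div_le _ _))
      dist_nonneg
  have hfi := hqs.dist_le_of_dist_le_pow hD (pow_nonneg hθ0 _) (pow_le_one₀ hθ0 hθ1.le) hK₀
    (hη 1 zero_le_one) (h.mem i) (h.mem (i + 1)) (h.mem j) m hgeo
  have hfj := h.dist_image_le hqs hc (hc.le.trans hca) (hη _ (div_nonneg (hc.le.trans hca) hc.le))
    hstep (by omega : j < M) (h.mem i) (h.dist_le (by omega))
  calc dist (f (p (i + 1))) (f (p i)) = dist (f (p i)) (f (p (i + 1))) := dist_comm _ _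
    _ ≤ η 1 * ((1 / 2) ^ m * dist (f (p j)) (f (p i))) := by rwa [dist_comm (f (p j))]
    _ ≤ η 1 * ((1 / 2) ^ m * (η (a / c) * κ * bdist D' (f (p j)))) := by
        gcongr; exact hη 1 zero_le_one
    _ = η 1 * (η (a / c) * κ) * (1 / 2) ^ m * bdist D' (f (p j)) := by ring

/-- The first `N` image steps after `p j` are controlled by comparability of boundary distances,
the later ones decay geometrically. -/
theorem sum_dist_image_le (h : IsCarrotChain D a c M p Λ) (hqs : IsQSOn f D η)
    (hD : IsPreconnected D) (hc : 0 < c) (hc1 : c ≤ 1) (hca : c ≤ a)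
    (hη : ∀ t, 0 ≤ t → 0 ≤ η t) {K₀ N : ℕ} (hK₀0 : 0 < K₀) (hK₀ : η ((1 - c / a) ^ K₀) ≤ 1 / 2)
    (hN : 2 * a * (1 - c / a) ^ N ≤ c) (hκ : 0 ≤ κ)
    (hstep : ∀ i ≤ M, dist (f (p (i + 1))) (f (p i)) ≤ κ * bdist D' (f (p i))) (hj : j ≤ M) :
    ∑ i ∈ Finset.Ico j (M + 1), dist (f (p (i + 1))) (f (p i)) ≤
      ((N + 1) * (κ * (1 + η (a / c) * κ)) + 2 * K₀ * (η 1 * (η (a / c) * κ))) *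
        bdist D' (f (p j)) := by
  set W₀ := κ * (1 + η (a / c) * κ)
  set W₁ := η 1 * (η (a / c) * κ)
  set d := bdist D' (f (p j))
  have hηac := hη (a / c) (div_nonneg (hc.le.trans hca) hc.le)
  have hnear (i : ℕ) (hji : j ≤ i) (hiM : i ≤ M) : dist (f (p (i + 1))) (f (p i)) ≤ W₀ * d :=
    (hstep i hiM).trans <| by
      rw [mul_assoc]
      exact mul_le_mul_of_nonneg_left
        (h.bdist_image_le hqs hc (hc.le.trans hca) hηac hκ hstep hji hiM) hκ
  have hterm : ∀ i ∈ Finset.Ico j M, dist (f (p (i + 1))) (f (p i)) ≤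
      (if i - j < N then W₀ else W₁ * (1 / 2) ^ ((i - j - N) / K₀)) * d := by
    intro i hi
    obtain ⟨hji, hiM⟩ := Finset.mem_Ico.1 hi
    split_ifs with hl
    · exact hnear i hji hiM.le
    · exact h.dist_image_succ_le_half_pow hqs hD hc hc1 hca hη hK₀ hN hstep hiM (by omega)
  calc ∑ i ∈ Finset.Ico j (M + 1), dist (f (p (i + 1))) (f (p i))
      = ∑ i ∈ Finset.Ico j M, dist (f (p (i + 1))) (f (p i)) + dist (f (p (M + 1))) (f (p M)) :=
        Finset.sum_Ico_succ_top hj _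
    _ ≤ (∑ l ∈ Finset.range (M - j), (if l < N then W₀ else W₁ * (1 / 2) ^ ((l - N) / K₀))) * d
          + W₀ * d := by
        rw [Finset.sum_mul]
        refine add_le_add ((Finset.sum_le_sum hterm).trans_eq ?_) (hnear M hj le_rfl)
        rw [Finset.sum_Ico_eq_sum_range]
        simp only [Nat.add_sub_cancel_left]
    _ ≤ (N * W₀ + W₁ * (2 * K₀)) * d + W₀ * d := by
        gcongr
        · exact bdist_nonneg _ _
        · exact sum_range_ite_le (mul_nonneg hκ (add_nonneg zero_le_one (mul_nonneg hηac hκ)))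
            (mul_nonneg (hη 1 zero_le_one) (mul_nonneg hηac hκ)) hK₀0 N _
    _ = ((N + 1) * W₀ + 2 * K₀ * W₁) * d := by ring

end IsCarrotChain

section Polygon

variable {E : Type*} [NormedAddCommGroup E] [NormedSpace ℝ E]

noncomputable def ramp (m l : ℕ) (s : ℝ) : ℝ := projIcc (0 : ℝ) 1 zero_le_one (s * (m + 1) - l)

theorem ramp_of_le {m l : ℕ} {s : ℝ} (h : s * (m + 1) ≤ l) : ramp m l s = 0 := by
  simp [ramp, projIcc_of_le_left _ (sub_nonpos.2 h)]

theorem ramp_of_ge {m l : ℕ} {s : ℝ} (h : (l : ℝ) + 1 ≤ s * (m + 1)) : ramp m l s = 1 := by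
  simp [ramp, projIcc_of_right_le _ (by linarith : (1 : ℝ) ≤ s * (m + 1) - l)]

theorem ramp_nonneg (m l : ℕ) (s : ℝ) : 0 ≤ ramp m l s := (projIcc _ _ _ _).2.1

theorem ramp_le_one (m l : ℕ) (s : ℝ) : ramp m l s ≤ 1 := (projIcc _ _ _ _).2.2

theorem monotone_ramp (m l : ℕ) : Monotone (ramp m l) := fun _ _ hst =>
  Subtype.mono_coe _ (monotone_projIcc _ (by gcongr))

theorem continuous_ramp (m l : ℕ) : Continuous (ramp m l) :=
  continuous_subtype_val.comp (continuous_projIcc.comp (by fun_prop))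

noncomputable def polygon (u : ℕ → E) (m : ℕ) (s : ℝ) : E :=
  u 0 + ∑ l ∈ Finset.range (m + 1), ramp m l s • (u (l + 1) - u l)

variable (u : ℕ → E) (m : ℕ)

theorem continuous_polygon : Continuous (polygon u m) :=
  continuous_const.add <| continuous_finsetSum _ fun l _ =>
    (continuous_ramp m l).smul continuous_const

theorem polygon_vertex {k : ℕ} (hk : k ≤ m + 1) : polygon u m (k / (m + 1)) = u k := by
  have hs : (k / (m + 1) : ℝ) * (m + 1) = k := div_mul_cancel₀ _ (by positivity)
  have hbefore : ∀ l ∈ Finset.range k, ramp m l (k / (m + 1)) • (u (l + 1) - u l) =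
      u (l + 1) - u l := fun l hl => by
    rw [ramp_of_ge (by rw [hs]; exact_mod_cast Finset.mem_range.1 hl), one_smul]
  have hafter : ∀ l ∈ Finset.Ico k (m + 1), ramp m l (k / (m + 1)) • (u (l + 1) - u l) = 0 :=
    fun l hl => by rw [ramp_of_le (by rw [hs]; exact_mod_cast (Finset.mem_Ico.1 hl).1), zero_smul]
  rw [polygon, ← Finset.sum_range_add_sum_Ico _ hk, Finset.sum_congr rfl hbefore,
    Finset.sum_congr rfl hafter, Finset.sum_range_sub, Finset.sum_const_zero]
  abel

theorem eVariationOn_polygon_le {A B : ℝ} (hAB : A ≤ B) :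
    eVariationOn (polygon u m) (Icc A B) ≤ ENNReal.ofReal
      (∑ l ∈ Finset.range (m + 1), dist (u (l + 1)) (u l) * (ramp m l B - ramp m l A)) := by
  have hsplit : polygon u m =
      (fun _ => u 0) + ∑ l ∈ Finset.range (m + 1), fun s => ramp m l s • (u (l + 1) - u l) := by
    ext s; simp [polygon, Finset.sum_apply]
  rw [hsplit, ENNReal.ofReal_sum_of_nonneg fun l _ =>
    mul_nonneg dist_nonneg (sub_nonneg.2 (monotone_ramp m l hAB))]
  refine (eVariationOn.add_le _ _ _).trans ?_
  rw [eVariationOn.constant_on (subsingleton_singleton.anti (image_subset_iff.2 fun _ _ => rfl)),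
    zero_add]
  refine (eVariationOn.finset_sum_le _ _ _).trans (Finset.sum_le_sum fun l _ => ?_)
  refine (eVariationOn.smul_const_le _ _ _).trans_eq ?_
  have hmono := ((monotone_ramp m l).monotoneOn univ).eVariationOn_eq (mem_univ A) (mem_univ B)
  rw [univ_inter] at hmono
  rw [hmono, ENNReal.ofReal_mul dist_nonneg, dist_eq_norm, ofReal_norm]
  rfl

variable {u m}

theorem dist_polygon_le {k : ℕ} (hk : k ≤ m) {s : ℝ} (hs₁ : (k : ℝ) ≤ s * (m + 1))
    (hs₂ : s * (m + 1) ≤ k + 1) : dist (polygon u m s) (u (k + 1)) ≤ dist (u (k + 1)) (u k) := by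
  have hm : (0 : ℝ) < m + 1 := by positivity
  set B : ℝ := (k + 1 : ℕ) / (m + 1)
  have hB : B * (m + 1) = k + 1 := by simp only [B]; rw [div_mul_cancel₀ _ hm.ne']; push_cast; ring
  have hsB : s ≤ B := le_of_mul_le_mul_right (by rw [hB]; exact hs₂) hm
  have hsum : ∑ l ∈ Finset.range (m + 1), dist (u (l + 1)) (u l) * (ramp m l B - ramp m l s) =
      dist (u (k + 1)) (u k) * (ramp m k B - ramp m k s) := by
    refine Finset.sum_eq_single_of_mem k (Finset.mem_range.2 (by omega)) fun l _ hlk => ?_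
    rcases lt_or_gt_of_ne hlk with hl | hl
    · have hl' : (l : ℝ) + 1 ≤ k := by exact_mod_cast hl
      rw [ramp_of_ge (by linarith), ramp_of_ge (by linarith), sub_self, mul_zero]
    · have hl' : (k : ℝ) + 1 ≤ l := by exact_mod_cast hl
      rw [ramp_of_le (by linarith), ramp_of_le (by linarith), sub_self, mul_zero]
  have hvar := (eVariationOn.edist_le (polygon u m) (s := Icc s B) ⟨le_rfl, hsB⟩
    ⟨hsB, le_rfl⟩).trans
    ((eVariationOn_polygon_le u m hsB).trans_eq (by rw [hsum]))
  rw [polygon_vertex u m (by omega : k + 1 ≤ m + 1),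
    edist_le_ofReal (mul_nonneg dist_nonneg (sub_nonneg.2 (monotone_ramp m k hsB)))] at hvar
  refine hvar.trans (mul_le_of_le_one_right dist_nonneg ?_)
  linarith [ramp_le_one m k B, ramp_nonneg m k s]

theorem eVariationOn_polygon_Icc_zero_le {k : ℕ} (hk : k ≤ m) {s : ℝ} (hs₀ : 0 ≤ s)
    (hs : s * (m + 1) ≤ k + 1) : eVariationOn (polygon u m) (Icc 0 s) ≤
      ENNReal.ofReal (∑ l ∈ Finset.range (k + 1), dist (u (l + 1)) (u l)) := by
  refine (eVariationOn_polygon_le u m hs₀).trans (ENNReal.ofReal_le_ofReal ?_)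
  rw [← Finset.sum_range_add_sum_Ico _ (by omega : k + 1 ≤ m + 1)]
  have hafter : ∀ l ∈ Finset.Ico (k + 1) (m + 1),
      dist (u (l + 1)) (u l) * (ramp m l s - ramp m l 0) = 0 := fun l hl => by
    have : (k : ℝ) + 1 ≤ l := by exact_mod_cast (Finset.mem_Ico.1 hl).1
    rw [ramp_of_le (by linarith), ramp_of_le (by simp), sub_self, mul_zero]
  rw [Finset.sum_congr rfl hafter, Finset.sum_const_zero, add_zero]
  refine Finset.sum_le_sum fun l _ => mul_le_of_le_one_right dist_nonneg ?_
  rw [ramp_of_le (by simp : (0 : ℝ) * (m + 1) ≤ l), sub_zero]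
  exact ramp_le_one m l s

theorem exists_nat_le_le_add_one {r : ℝ} (h₀ : 0 ≤ r) (h₁ : r ≤ m + 1) :
    ∃ k ≤ m, (k : ℝ) ≤ r ∧ r ≤ k + 1 := by
  by_cases hfl : ⌊r⌋₊ ≤ m
  · exact ⟨⌊r⌋₊, hfl, Nat.floor_le h₀, (Nat.lt_floor_add_one r).le⟩
  · refine ⟨m, le_rfl, ?_, h₁⟩
    have : (m : ℝ) + 1 ≤ ⌊r⌋₊ := by exact_mod_cast not_le.1 hfl
    linarith [Nat.floor_le h₀]

theorem isCurveIn_polygon_and_carrot {D : Set E} {K : ℝ} (hpos : ∀ k ≤ m, 0 < bdist D (u (k + 1)))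
    (hstep : ∀ k ≤ m, dist (u (k + 1)) (u k) ≤ bdist D (u (k + 1)) / 4)
    (hsum : ∀ k ≤ m, ∑ l ∈ Finset.range (k + 1), dist (u (l + 1)) (u l) ≤
      K * bdist D (u (k + 1))) (hK : 0 ≤ K) :
    IsCurveIn D (polygon u m) (u 0) (u (m + 1)) ∧ ∀ t ∈ Icc (0 : ℝ) 1,
      eVariationOn (polygon u m) (Icc 0 t) ≤
        ENNReal.ofReal (4 / 3 * K * bdist D (polygon u m t)) := by
  have key (t : ℝ) (ht : t ∈ Icc (0 : ℝ) 1) : polygon u m t ∈ D ∧ eVariationOn (polygon u m)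
      (Icc 0 t) ≤ ENNReal.ofReal (4 / 3 * K * bdist D (polygon u m t)) := by
    obtain ⟨k, hk, hk₁, hk₂⟩ := exists_nat_le_le_add_one (r := t * (m + 1))
      (mul_nonneg ht.1 (by positivity)) (by nlinarith [ht.2])
    have hnear := (dist_polygon_le hk hk₁ hk₂).trans (hstep k hk)
    have hpk := hpos k hk
    have hd := bdist_le_bdist_add_dist D (u (k + 1)) (polygon u m t)
    rw [dist_comm] at hd
    refine ⟨mem_of_dist_lt_bdist (x := u (k + 1)) (by linarith),
      (eVariationOn_polygon_Icc_zero_le hk ht.1 hk₂).trans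
        (ENNReal.ofReal_le_ofReal ((hsum k hk).trans ?_))⟩
    nlinarith
  refine ⟨⟨(continuous_polygon u m).continuousOn, fun t ht => (key t ht).1, ?_, ?_⟩,
    fun t ht => (key t ht).2⟩
  · simpa using polygon_vertex u m (k := 0) (by omega)
  · simpa [div_self (by positivity : (m : ℝ) + 1 ≠ 0)] using polygon_vertex u m (le_refl (m + 1))

end Polygon

theorem exists_carrot_polygon_of_chain {E : Type*} [NormedAddCommGroup E] [NormedSpace ℝ E]
    {D : Set E} {v : ℕ → E} {M : ℕ} {K : ℝ} (hK : 0 ≤ K) (hpos : ∀ i ≤ M, 0 < bdist D (v i))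
    (hstep : ∀ i ≤ M, dist (v (i + 1)) (v i) ≤ bdist D (v i) / 4)
    (hsum : ∀ j ≤ M, ∑ i ∈ Finset.Ico j (M + 1), dist (v (i + 1)) (v i) ≤ K * bdist D (v j)) :
    ∃ γ : ℝ → E, IsCurveIn D γ (v (M + 1)) (v 0) ∧ ∀ t ∈ Icc (0 : ℝ) 1,
      eVariationOn γ (Icc 0 t) ≤ ENNReal.ofReal (4 / 3 * K * bdist D (γ t)) := by
  set u : ℕ → E := fun l => v (M + 1 - l)
  have hu (k : ℕ) (hk : k ≤ M) : u k = v (M - k + 1) := by simp only [u]; congr 1; omega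
  have hu' (k : ℕ) (hk : k ≤ M) : u (k + 1) = v (M - k) := by simp only [u]; congr 1; omega
  have hrev (k : ℕ) (hk : k ≤ M) : ∑ l ∈ Finset.range (k + 1), dist (u (l + 1)) (u l) =
      ∑ i ∈ Finset.Ico (M - k) (M + 1), dist (v (i + 1)) (v i) := by
    rw [Finset.sum_Ico_eq_sum_range, show M + 1 - (M - k) = k + 1 by omega,
      ← Finset.sum_range_reflect (fun r => dist (v (M - k + r + 1)) (v (M - k + r)))]
    refine Finset.sum_congr rfl fun l hl => ?_
    have hl := Finset.mem_range.1 hl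
    rw [hu l (by omega), hu' l (by omega), dist_comm, show M - k + (k + 1 - 1 - l) = M - l by omega]
  obtain ⟨hcurve, hcarrot⟩ := isCurveIn_polygon_and_carrot (u := u) (m := M) (D := D) (K := K)
    (fun k hk => by rw [hu' k hk]; exact hpos _ (by omega))
    (fun k hk => by rw [hu' k hk, hu k hk, dist_comm]; exact hstep _ (by omega))
    (fun k hk => by rw [hrev k hk, hu' k hk]; exact hsum _ (by omega)) hK
  exact ⟨polygon u M, by simpa [u] using hcurve, hcarrot⟩

namespace QSControl

variable {η : ℝ → ℝ}

theorem nonneg (hη : QSControl η) {t : ℝ} (ht : 0 ≤ t) : 0 ≤ η t :=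
  hη.zero ▸ hη.mono.monotoneOn (mem_Ici.2 le_rfl) ht ht

theorem pos (hη : QSControl η) {t : ℝ} (ht : 0 < t) : 0 < η t :=
  hη.zero ▸ hη.mono (mem_Ici.2 le_rfl) ht.le ht

theorem exists_pos_le (hη : QSControl η) {ε : ℝ} (hε : 0 < ε) :
    ∃ δ, 0 < δ ∧ δ ≤ 1 ∧ η δ ≤ ε := by
  obtain ⟨t, ht₀, htε⟩ := hη.surj ε hε.le
  have ht : 0 < t := ht₀.lt_of_ne (by rintro rfl; rw [hη.zero] at htε; linarith)
  exact ⟨min t 1, lt_min ht one_pos, min_le_right _ _,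
    htε ▸ hη.mono.monotoneOn (le_min ht₀ zero_le_one) ht₀ (min_le_left _ _)⟩

end QSControl

/-- `c` is the step ratio of the carrot chain; `K₀` steps shrink its remaining length enough to
halve image distances, and `N` steps after `p j` it has left the ball of radius `d(p j) / 2`
around `p j`. -/
theorem IsLengthJohn.image_of_isQSOn {X : Type*} [MetricSpace X] [ProperSpace X] {F : Type*}
    [NormedAddCommGroup F] [NormedSpace ℝ F] [ProperSpace F] {D : Set X} {D' : Set F}
    (hD : IsOpen D) (hDconn : IsPreconnected D) (hDc : Dᶜ.Nonempty) (hD' : IsOpen D')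
    (hD'c : D'ᶜ.Nonempty) {f : X → F} (hf : ContinuousOn f D) (hfD : MapsTo f D D')
    (hfD' : SurjOn f D D') {η : ℝ → ℝ} (hqs : IsQSOn f D η) (hη : ∀ t, 0 ≤ t → 0 ≤ η t)
    {a c : ℝ} {K₀ N : ℕ} (hc : 0 < c) (hc1 : c ≤ 1) (hca : c ≤ a) (hηc : η (2 * c) ≤ 1 / 4)
    (hK₀0 : 0 < K₀) (hK₀ : η ((1 - c / a) ^ K₀) ≤ 1 / 2) (hN : 2 * a * (1 - c / a) ^ N ≤ c)
    {x₀ : X} (hJohn : IsLengthJohn D a x₀) :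
    IsLengthJohn D' (4 / 3 * ((N + 1) * (η (2 * c) * (1 + η (a / c) * η (2 * c))) +
      2 * K₀ * (η 1 * (η (a / c) * η (2 * c))))) (f x₀) := by
  intro x' hx'
  obtain ⟨x, hx, rfl⟩ := hfD' hx'
  obtain ⟨α, hα, hcarrot⟩ := hJohn x hx
  obtain ⟨M, p, Λ, hch, hp₀, hpM⟩ := exists_isCarrotChain hα hcarrot (bdist_pos hD hDc hx) hc hca
  have hκ := hη (2 * c) (by positivity)
  have hηac := hη (a / c) (div_nonneg (hc.le.trans hca) hc.le)
  have hη1 := hη 1 zero_le_one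
  have hstep (i : ℕ) (_ : i ≤ M) :
      dist (f (p (i + 1))) (f (p i)) ≤ η (2 * c) * bdist D' (f (p i)) := by
    rw [dist_comm]
    exact hqs.dist_le_mul_bdist hD hDc hD' hD'c hf hfD hfD' (hch.mem i) (hch.mem (i + 1)) hc.le hκ
      (by rw [dist_comm]; exact hch.dist_succ_le i)
  obtain ⟨γ, hγ, hγcarrot⟩ := exists_carrot_polygon_of_chain (v := f ∘ p) (by positivity)
    (fun i _ => bdist_pos hD' hD'c (hfD (hch.mem i)))
    (fun i hi => (hstep i hi).trans <| by
      simpa [div_eq_inv_mul] using mul_le_mul_of_nonneg_right hηc (bdist_nonneg D' (f (p i))))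
    (fun j hj => hch.sum_dist_image_le hqs hDconn hc hc1 hca hη hK₀0 hK₀ hN hκ hstep hj)
  refine ⟨γ, ?_, hγcarrot⟩
  rwa [Function.comp_apply, Function.comp_apply, hpM, hp₀] at hγ

/-- Corollary: If `D ⊊ ℝⁿ` is a length `a`-John domain with center `x₀`
and `f : D → D'` is an `η`-quasisymmetric homeomorphism onto a domain `D' ⊊ ℝⁿ`, then
`D'` is a length `a'`-John domain with center `f(x₀)`, where `a'` depends only on `a`
and `η` (not on `n`). -/
theorem euclidean_john_qs_invariance (a : ℝ) (ha : 1 ≤ a) (η : ℝ → ℝ)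
    (hη : QSControl η) :
    ∃ a' : ℝ, 0 < a' ∧
      ∀ (n : ℕ) (D D' : Set (EuclideanSpace ℝ (Fin n))),
        IsOpen D → IsConnected D → D ≠ Set.univ →
        IsOpen D' → IsConnected D' → D' ≠ Set.univ →
        ∀ (f g : EuclideanSpace ℝ (Fin n) → EuclideanSpace ℝ (Fin n)),
          IsHomeoOn f g D D' → IsQSOn f D η →
          ∀ x₀ ∈ D, IsLengthJohn D a x₀ → IsLengthJohn D' a' (f x₀) := by
  obtain ⟨δ, hδ, hδ1, hηδ⟩ := hη.exists_pos_le (by norm_num : (0 : ℝ) < 1 / 4)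
  obtain ⟨σ, hσ, hσ1, hησ⟩ := hη.exists_pos_le (by norm_num : (0 : ℝ) < 1 / 2)
  set c := δ / 2 with hc_def
  have hc : 0 < c := by positivity
  have hηc : η (2 * c) ≤ 1 / 4 := by rwa [hc_def, mul_div_cancel₀ δ two_ne_zero]
  obtain ⟨hθ0, hθ1⟩ := one_sub_div_mem_Ico hc (by linarith : c ≤ a)
  obtain ⟨K₀, hK₀⟩ := exists_pow_lt_of_lt_one hσ hθ1
  obtain ⟨N, hN⟩ := exists_pow_lt_of_lt_one (by positivity : 0 < c / (2 * a)) hθ1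
  replace hN : 2 * a * (1 - c / a) ^ N ≤ c := by rw [lt_div_iff₀ (by positivity)] at hN; linarith
  have hK₀0 : 0 < K₀ := Nat.pos_of_ne_zero fun h => by rw [h, pow_zero] at hK₀; linarith
  have hκ : 0 < η (2 * c) := hη.pos (by positivity)
  have hηac : 0 ≤ η (a / c) := hη.nonneg (by positivity)
  have hη1 : 0 ≤ η 1 := hη.nonneg zero_le_one
  refine ⟨_, by positivity, fun n D D' hD hDconn hDne hD' _ hD'ne f g ⟨hf, _, hfD, hgD', hinv⟩
    hqs x₀ _ hJohn => hJohn.image_of_isQSOn hD hDconn.isPreconnected (nonempty_compl.2 hDne) hD'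
      (nonempty_compl.2 hD'ne) hf hfD (fun y hy => ⟨g y, hgD' hy, hinv.2 hy⟩) hqs
      (fun _ => hη.nonneg) hc (by linarith) (by linarith) hηc hK₀0
      ((hη.mono.monotoneOn (pow_nonneg hθ0 K₀) hσ.le hK₀.le).trans hησ) hN⟩
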